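/- Let A be an m×n real matrix, ξ ∈ [0,1), σ ≥ 0, θ ≥ 1, and suppose A satisfies VSḠ_s(ξ,σ,θ) with certificate Y. Then the pair (Y, v = 0) satisfies the defining inequalities of VSG_s(ξ,θ,0,σ), i.e., writing C_i for the i-th column of I_n − YᵀA: Φ_s(−C_i) ≤ ξ for all i; Φ_s(C_i) ≤ ξ for all i ∈ P_n; Φ_s(C_i) ≤ θξ for all i ∈ P_+; and ‖y_i‖_* ≤ σ for all i. In particular, if ξ < 1, A is s-semigood. -/

import Mathlib

open Finset

noncomputable def normS1 {n : ℕ} (s : ℕ) (x : Fin n → ℝ) : ℝ :=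
  (Finset.univ.powerset.filter (fun J : Finset (Fin n) => J.card ≤ s)).sup'
    ⟨∅, by simp⟩ (fun J => ∑ i ∈ J, |x i|)

noncomputable def dualNorm {m : ℕ} (N : (Fin m → ℝ) → ℝ) (v : Fin m → ℝ) : ℝ :=
  sSup {r : ℝ | ∃ x : Fin m → ℝ, N x ≤ 1 ∧ r = ∑ k, v k * x k}

def IsNorm {m : ℕ} (N : (Fin m → ℝ) → ℝ) : Prop :=
  (∀ x y, N (x + y) ≤ N x + N y) ∧ (∀ (c : ℝ) (x), N (c • x) = |c| * N x) ∧
  (∀ x, N x = 0 → x = 0)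

def SemiGood {m n : ℕ} (A : Matrix (Fin m) (Fin n) ℝ) (Pplus : Finset (Fin n)) (s : ℕ) : Prop :=
  ∀ w : Fin n → ℝ,
    (Finset.univ.filter (fun i => w i ≠ 0)).card ≤ s →
    (∀ i ∈ Pplus, 0 ≤ w i) →
    ∀ z : Fin n → ℝ, A.mulVec z = A.mulVec w → (∀ i ∈ Pplus, 0 ≤ z i) →
      (∑ i, |z i|) ≤ (∑ i, |w i|) → z = w

def SGCond {m n : ℕ} (A : Matrix (Fin m) (Fin n) ℝ) (Pplus : Finset (Fin n))
    (s : ℕ) (ξ θ : ℝ) : Prop :=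
  ∀ x : Fin n → ℝ, A.mulVec x = 0 → ∀ J : Finset (Fin n), J.card ≤ s →
    ∑ i ∈ J ∩ Pplus, x i + ∑ i ∈ J ∩ Pplusᶜ, |x i| ≤
      ξ * (∑ i ∈ Pplusᶜ \ J, |x i| + ∑ i ∈ Pplus \ J, max (-x i) (θ * x i))

def SGbCond {m n : ℕ} (A : Matrix (Fin m) (Fin n) ℝ) (Pplus : Finset (Fin n))
    (s : ℕ) (ξ θ β : ℝ) (N : (Fin m → ℝ) → ℝ) : Prop :=
  ∀ x : Fin n → ℝ, ∀ J : Finset (Fin n), J.card ≤ s →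
    ∑ i ∈ J ∩ Pplus, x i + ∑ i ∈ J ∩ Pplusᶜ, |x i| ≤
      β * N (A.mulVec x) +
        ξ * (∑ i ∈ Pplusᶜ \ J, |x i| + ∑ i ∈ Pplus \ J, max (-x i) (θ * x i))

def SGbCondSign {m n : ℕ} (A : Matrix (Fin m) (Fin n) ℝ) (Pplus : Finset (Fin n))
    (s : ℕ) (ξ β : ℝ) (N : (Fin m → ℝ) → ℝ) : Prop :=
  ∀ J : Finset (Fin n), J.card ≤ s →
    ∀ x : Fin n → ℝ, (∀ i ∈ Pplus \ J, x i ≤ 0) →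
      ∑ i ∈ J ∩ Pplus, x i + ∑ i ∈ J ∩ Pplusᶜ, |x i| ≤
        β * N (A.mulVec x) + ξ * ∑ i ∈ Jᶜ, |x i|

noncomputable def Phi {n : ℕ} (Pplus : Finset (Fin n)) (s : ℕ) (ξ θ : ℝ)
    (x : Fin n → ℝ) : ℝ :=
  normS1 s (fun i => if i ∈ Pplus then (1 + θ * ξ) * max (x i) 0 else (1 + ξ) * |x i|)

def VSGCert {m n : ℕ} (A : Matrix (Fin m) (Fin n) ℝ) (Pplus : Finset (Fin n))
    (s : ℕ) (ξ θ ρ σ : ℝ) (N : (Fin m → ℝ) → ℝ)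
    (Y : Matrix (Fin m) (Fin n) ℝ) (v : Fin m → ℝ) : Prop :=
  (∀ i, Phi Pplus s ξ θ (fun j => -((1 - Y.transpose * A : Matrix (Fin n) (Fin n) ℝ) j i)) + (A.transpose.mulVec v) i ≤ ξ) ∧
  (∀ i ∉ Pplus, Phi Pplus s ξ θ (fun j => (1 - Y.transpose * A : Matrix (Fin n) (Fin n) ℝ) j i) - (A.transpose.mulVec v) i ≤ ξ) ∧
  (∀ i ∈ Pplus, Phi Pplus s ξ θ (fun j => (1 - Y.transpose * A : Matrix (Fin n) (Fin n) ℝ) j i) - (A.transpose.mulVec v) i ≤ θ * ξ) ∧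
  (∀ i, dualNorm N (fun k => Y k i) ≤ σ) ∧
  dualNorm N v ≤ ρ

def VSG {m n : ℕ} (A : Matrix (Fin m) (Fin n) ℝ) (Pplus : Finset (Fin n))
    (s : ℕ) (ξ θ ρ σ : ℝ) (N : (Fin m → ℝ) → ℝ) : Prop :=
  ∃ (Y : Matrix (Fin m) (Fin n) ℝ) (v : Fin m → ℝ), VSGCert A Pplus s ξ θ ρ σ N Y v

def VSGbarCert {m n : ℕ} (A : Matrix (Fin m) (Fin n) ℝ) (Pplus : Finset (Fin n))
    (s : ℕ) (ξ σ θ : ℝ) (N : (Fin m → ℝ) → ℝ) (Y : Matrix (Fin m) (Fin n) ℝ) : Prop :=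
  (∀ i, dualNorm N (fun k => Y k i) ≤ σ) ∧
  (∀ i ∉ Pplus, ∀ j, |(1 - Y.transpose * A : Matrix (Fin n) (Fin n) ℝ) i j| ≤ ξ / ((1 + ξ) * s)) ∧
  (∀ i ∈ Pplus, ∀ j ∉ Pplus,
    -(ξ / ((1 + ξ * θ) * s)) ≤ (1 - Y.transpose * A : Matrix (Fin n) (Fin n) ℝ) i j ∧
      (1 - Y.transpose * A : Matrix (Fin n) (Fin n) ℝ) i j ≤ ξ / ((1 + ξ * θ) * s)) ∧
  (∀ i ∈ Pplus, ∀ j ∈ Pplus,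
    -(ξ / ((1 + ξ * θ) * s)) ≤ (1 - Y.transpose * A : Matrix (Fin n) (Fin n) ℝ) i j ∧
      (1 - Y.transpose * A : Matrix (Fin n) (Fin n) ℝ) i j ≤ ξ * θ / ((1 + ξ * θ) * s))

/-!
Write `B = 1 - Yᵀ A`. Multiplying the entrywise bounds on `B` by the weights `1 + θξ` (rows in
`P₊`) and `1 + ξ` (rows in `Pₙ`) bounds every entry of `D_θ` of a column of `B` by `ξ / s`
(`θξ / s` for a positive part in a column of `P₊`), so `Φ_s` of a column is at most `ξ` (`θξ`).

The same bounds, applied row by row to a kernel vector `x = B x`, give the null-space inequality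
`Φ_s(x) ≤ ξ · (∑_{P₊} (θ x⁺ + x⁻) + ∑_{Pₙ} |x|)`. For `w` supported on `J`, `|J| ≤ s`, and a
competitor `z` with `‖z‖₁ ≤ ‖w‖₁`, put `x = w - z`; off `J` we have `x⁺ = 0` on `P₊`. The `ℓ₁`
comparison bounds `∑_{Jᶜ} |x|` by the signed mass of `x` on `J`, while the null-space inequality
bounds that mass by `ξ` times `∑_{Jᶜ} |x|` (minus a nonnegative term); as `ξ < 1`, `x = 0`.
-/

open Matrix

lemma normS1_le {n s : ℕ} {v : Fin n → ℝ} {c : ℝ} (hc : 0 ≤ c) (h : ∀ i, |v i| ≤ c / s) :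
    normS1 s v ≤ c := by
  refine Finset.sup'_le _ _ fun J hJ => ?_
  have hJs : (J.card : ℝ) ≤ s := by exact_mod_cast (mem_filter.mp hJ).2
  calc ∑ i ∈ J, |v i| ≤ J.card • (c / s) := sum_le_card_nsmul _ _ _ fun i _ => h i
    _ ≤ s * (c / s) := by rw [nsmul_eq_mul]; gcongr
    _ ≤ c := by
      rcases eq_or_ne (s : ℝ) 0 with hs | hs
      · simp [hs, hc]
      · rw [mul_div_cancel₀ _ hs]

lemma sum_abs_le_normS1 {n s : ℕ} (v : Fin n → ℝ) {J : Finset (Fin n)} (hJ : J.card ≤ s) :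
    ∑ i ∈ J, |v i| ≤ normS1 s v :=
  Finset.le_sup' (fun J => ∑ i ∈ J, |v i|) (mem_filter.mpr ⟨mem_powerset.mpr (subset_univ J), hJ⟩)

section Phi

variable {n : ℕ} {Pplus : Finset (Fin n)} {s : ℕ} {ξ θ : ℝ}

def Dθ (Pplus : Finset (Fin n)) (ξ θ : ℝ) (x : Fin n → ℝ) (i : Fin n) : ℝ :=
  if i ∈ Pplus then (1 + θ * ξ) * max (x i) 0 else (1 + ξ) * |x i|

lemma Phi_eq_normS1_Dθ (x : Fin n → ℝ) : Phi Pplus s ξ θ x = normS1 s (Dθ Pplus ξ θ x) := rfl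

lemma Dθ_nonneg (hξ : 0 ≤ ξ) (hθ : 0 ≤ θ) (x : Fin n → ℝ) (i : Fin n) :
    0 ≤ Dθ Pplus ξ θ x i := by
  unfold Dθ; split_ifs <;> positivity

lemma sum_Dθ_le_Phi (hξ : 0 ≤ ξ) (hθ : 0 ≤ θ) (x : Fin n → ℝ) {J : Finset (Fin n)}
    (hJ : J.card ≤ s) : ∑ i ∈ J, Dθ Pplus ξ θ x i ≤ Phi Pplus s ξ θ x := by
  rw [Phi_eq_normS1_Dθ]
  simpa only [abs_of_nonneg (Dθ_nonneg hξ hθ x _)] using sum_abs_le_normS1 (Dθ Pplus ξ θ x) hJ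

lemma Phi_le {x : Fin n → ℝ} {c : ℝ} (hξ : 0 ≤ ξ) (hθ : 0 ≤ θ) (hc : 0 ≤ c)
    (hplus : ∀ i ∈ Pplus, (1 + θ * ξ) * x i ≤ c / s)
    (hneg : ∀ i ∉ Pplus, (1 + ξ) * |x i| ≤ c / s) : Phi Pplus s ξ θ x ≤ c := by
  rw [Phi_eq_normS1_Dθ]
  refine normS1_le hc fun i => ?_
  rw [abs_of_nonneg (Dθ_nonneg hξ hθ x i), Dθ]
  split_ifs with hi
  · rw [mul_max_of_nonneg _ _ (by positivity), mul_zero]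
    exact max_le (hplus i hi) (by positivity)
  · exact hneg i hi

end Phi

structure ScaledEntryBounds {n : ℕ} (Pplus : Finset (Fin n)) (s : ℕ) (ξ θ : ℝ)
    (B : Matrix (Fin n) (Fin n) ℝ) : Prop where
  abs_le_of_notMem : ∀ i ∉ Pplus, ∀ j, (1 + ξ) * |B i j| ≤ ξ / s
  neg_le_of_mem : ∀ i ∈ Pplus, ∀ j, -(ξ / s) ≤ (1 + θ * ξ) * B i j
  le_of_mem_of_notMem : ∀ i ∈ Pplus, ∀ j ∉ Pplus, (1 + θ * ξ) * B i j ≤ ξ / s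
  le_of_mem_of_mem : ∀ i ∈ Pplus, ∀ j ∈ Pplus, (1 + θ * ξ) * B i j ≤ θ * ξ / s

lemma VSGbarCert.scaledEntryBounds {m n : ℕ} {A : Matrix (Fin m) (Fin n) ℝ}
    {Pplus : Finset (Fin n)} {s : ℕ} {ξ σ θ : ℝ} {N : (Fin m → ℝ) → ℝ}
    {Y : Matrix (Fin m) (Fin n) ℝ} (hξ : 0 ≤ ξ) (hθ : 0 ≤ θ)
    (hY : VSGbarCert A Pplus s ξ σ θ N Y) :
    ScaledEntryBounds Pplus s ξ θ (1 - Yᵀ * A) := by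
  obtain ⟨-, hneg, hpos_neg, hpos_pos⟩ := hY
  simp only [mul_comm ξ θ] at hpos_neg hpos_pos
  have hcancel : ∀ a t : ℝ, 0 < a → a * (t / (a * s)) = t / s := fun a t ha => by
    rw [← mul_div_assoc, mul_div_mul_left _ _ ha.ne']
  have h1ξ : 0 < 1 + ξ := by linarith
  have h1θξ : 0 < 1 + θ * ξ := by positivity
  refine ⟨fun i hi j => ?_, fun i hi j => ?_, fun i hi j hj => ?_, fun i hi j hj => ?_⟩
  · rw [← hcancel _ ξ h1ξ]
    exact mul_le_mul_of_nonneg_left (hneg i hi j) h1ξ.le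
  · have hlo : -(ξ / ((1 + θ * ξ) * s)) ≤ (1 - Yᵀ * A : Matrix (Fin n) (Fin n) ℝ) i j := by
      by_cases hj : j ∈ Pplus
      exacts [(hpos_pos i hi j hj).1, (hpos_neg i hi j hj).1]
    rw [← hcancel _ ξ h1θξ, ← mul_neg]
    exact mul_le_mul_of_nonneg_left hlo h1θξ.le
  · rw [← hcancel _ ξ h1θξ]
    exact mul_le_mul_of_nonneg_left (hpos_neg i hi j hj).2 h1θξ.le
  · rw [← hcancel _ (θ * ξ) h1θξ]
    exact mul_le_mul_of_nonneg_left (hpos_pos i hi j hj).2 h1θξ.le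

namespace ScaledEntryBounds

variable {n : ℕ} {Pplus : Finset (Fin n)} {s : ℕ} {ξ θ : ℝ} {B : Matrix (Fin n) (Fin n) ℝ}

lemma Phi_neg_col_le (hB : ScaledEntryBounds Pplus s ξ θ B) (hξ : 0 ≤ ξ) (hθ : 0 ≤ θ)
    (i : Fin n) : Phi Pplus s ξ θ (fun j => -B j i) ≤ ξ :=
  Phi_le hξ hθ hξ (fun j hj => by simpa [mul_neg] using neg_le.mp (hB.neg_le_of_mem j hj i))
    fun j hj => by simpa only [abs_neg] using hB.abs_le_of_notMem j hj i

lemma Phi_col_le_of_notMem (hB : ScaledEntryBounds Pplus s ξ θ B) (hξ : 0 ≤ ξ) (hθ : 0 ≤ θ)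
    {i : Fin n} (hi : i ∉ Pplus) : Phi Pplus s ξ θ (fun j => B j i) ≤ ξ :=
  Phi_le hξ hθ hξ (fun j hj => hB.le_of_mem_of_notMem j hj i hi)
    fun j hj => hB.abs_le_of_notMem j hj i

lemma Phi_col_le_of_mem (hB : ScaledEntryBounds Pplus s ξ θ B) (hξ : 0 ≤ ξ) (hθ : 1 ≤ θ)
    {i : Fin n} (hi : i ∈ Pplus) : Phi Pplus s ξ θ (fun j => B j i) ≤ θ * ξ := by
  have hθ0 : 0 ≤ θ := zero_le_one.trans hθ
  refine Phi_le hξ hθ0 (by positivity) (fun j hj => hB.le_of_mem_of_mem j hj i hi)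
    fun j hj => (hB.abs_le_of_notMem j hj i).trans ?_
  gcongr
  exact le_mul_of_one_le_left hξ hθ

end ScaledEntryBounds

lemma mul_le_mul_max_add_mul_max {b t β γ : ℝ} (hlo : -β ≤ b) (hhi : b ≤ γ) :
    b * t ≤ γ * max t 0 + β * max (-t) 0 := by
  rcases le_total 0 t with ht | ht
  · rw [max_eq_left ht, max_eq_right (neg_nonpos.2 ht)]; nlinarith
  · rw [max_eq_right ht, max_eq_left (neg_nonneg.2 ht)]; nlinarith

section Kernel

variable {n : ℕ} {Pplus : Finset (Fin n)} {s : ℕ} {ξ θ : ℝ}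

def weightedAbs (Pplus : Finset (Fin n)) (θ : ℝ) (x : Fin n → ℝ) (j : Fin n) : ℝ :=
  if j ∈ Pplus then θ * max (x j) 0 + max (-x j) 0 else |x j|

lemma weightedAbs_nonneg (hθ : 0 ≤ θ) (x : Fin n → ℝ) (j : Fin n) :
    0 ≤ weightedAbs Pplus θ x j := by
  unfold weightedAbs; split_ifs <;> positivity

lemma abs_le_weightedAbs (hθ : 1 ≤ θ) (x : Fin n → ℝ) (j : Fin n) :
    |x j| ≤ weightedAbs Pplus θ x j := by
  unfold weightedAbs
  split_ifs
  · rw [← max_zero_add_max_neg_zero_eq_abs_self]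
    gcongr
    exact le_mul_of_one_le_left (le_max_right _ _) hθ
  · rfl

variable {B : Matrix (Fin n) (Fin n) ℝ} {x : Fin n → ℝ}

lemma mul_apply_eq_sum_of_mulVec_eq_self (hx : B *ᵥ x = x) (c : ℝ) (i : Fin n) :
    c * x i = ∑ j, c * B i j * x j := by
  rw [← congrFun hx i, mulVec, dotProduct, mul_sum]
  simp only [mul_assoc]

lemma ScaledEntryBounds.mul_apply_le_of_mem (hB : ScaledEntryBounds Pplus s ξ θ B)
    (hx : B *ᵥ x = x) {i : Fin n} (hi : i ∈ Pplus) :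
    (1 + θ * ξ) * x i ≤ ξ / s * ∑ j, weightedAbs Pplus θ x j := by
  have hentry : ∀ j, (1 + θ * ξ) * B i j * x j ≤ ξ / s * weightedAbs Pplus θ x j := fun j => by
    unfold weightedAbs
    split_ifs with hj
    · calc (1 + θ * ξ) * B i j * x j ≤ θ * ξ / s * max (x j) 0 + ξ / s * max (-x j) 0 :=
            mul_le_mul_max_add_mul_max (hB.neg_le_of_mem i hi j) (hB.le_of_mem_of_mem i hi j hj)
        _ = ξ / s * (θ * max (x j) 0 + max (-x j) 0) := by ring
    · calc (1 + θ * ξ) * B i j * x j ≤ ξ / s * max (x j) 0 + ξ / s * max (-x j) 0 :=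
            mul_le_mul_max_add_mul_max (hB.neg_le_of_mem i hi j)
              (hB.le_of_mem_of_notMem i hi j hj)
        _ = ξ / s * |x j| := by rw [← mul_add, max_zero_add_max_neg_zero_eq_abs_self]
  calc (1 + θ * ξ) * x i = ∑ j, (1 + θ * ξ) * B i j * x j :=
        mul_apply_eq_sum_of_mulVec_eq_self hx _ i
    _ ≤ ∑ j, ξ / s * weightedAbs Pplus θ x j := sum_le_sum fun j _ => hentry j
    _ = ξ / s * ∑ j, weightedAbs Pplus θ x j := (mul_sum _ _ _).symm

lemma ScaledEntryBounds.mul_abs_apply_le_of_notMem (hB : ScaledEntryBounds Pplus s ξ θ B)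
    (hξ : 0 ≤ ξ) (hθ : 1 ≤ θ) (hx : B *ᵥ x = x) {i : Fin n} (hi : i ∉ Pplus) :
    (1 + ξ) * |x i| ≤ ξ / s * ∑ j, weightedAbs Pplus θ x j := by
  have h1ξ : 0 ≤ 1 + ξ := by linarith
  calc (1 + ξ) * |x i| = |∑ j, (1 + ξ) * B i j * x j| := by
        rw [← mul_apply_eq_sum_of_mulVec_eq_self hx, abs_mul, abs_of_nonneg h1ξ]
    _ ≤ ∑ j, |(1 + ξ) * B i j * x j| := abs_sum_le_sum_abs _ _
    _ ≤ ∑ j, ξ / s * weightedAbs Pplus θ x j := by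
        refine sum_le_sum fun j _ => ?_
        rw [abs_mul, abs_mul, abs_of_nonneg h1ξ]
        exact mul_le_mul (hB.abs_le_of_notMem i hi j) (abs_le_weightedAbs hθ x j)
          (abs_nonneg _) (by positivity)
    _ = ξ / s * ∑ j, weightedAbs Pplus θ x j := (mul_sum _ _ _).symm

lemma ScaledEntryBounds.Phi_le_of_mulVec_eq_self (hB : ScaledEntryBounds Pplus s ξ θ B)
    (hξ : 0 ≤ ξ) (hθ : 1 ≤ θ) (hx : B *ᵥ x = x) :
    Phi Pplus s ξ θ x ≤ ξ * ∑ j, weightedAbs Pplus θ x j := by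
  have hθ0 : 0 ≤ θ := zero_le_one.trans hθ
  refine Phi_le hξ hθ0 (mul_nonneg hξ (sum_nonneg fun j _ => weightedAbs_nonneg hθ0 x j))
    (fun i hi => ?_) fun i hi => ?_
  · rw [mul_div_right_comm]; exact hB.mul_apply_le_of_mem hx hi
  · rw [mul_div_right_comm]; exact hB.mul_abs_apply_le_of_notMem hξ hθ hx hi

end Kernel

section SemiGood

variable {n : ℕ} {Pplus : Finset (Fin n)}

lemma sum_compl_abs_sub_le {w z : Fin n → ℝ} {J : Finset (Fin n)} (hwJ : ∀ j ∉ J, w j = 0)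
    (hwP : ∀ i ∈ Pplus, 0 ≤ w i) (hl1 : ∑ i, |z i| ≤ ∑ i, |w i|) :
    ∑ j ∈ Jᶜ, |w j - z j| ≤ ∑ j ∈ J, (if j ∈ Pplus then w j - z j else |w j - z j|) := by
  have hz : ∀ j, |w j| - (if j ∈ Pplus then w j - z j else |w j - z j|) ≤ |z j| := fun j => by
    split_ifs with hj
    · rw [abs_of_nonneg (hwP j hj)]; linarith [le_abs_self (z j)]
    · linarith [abs_sub_abs_le_abs_sub (w j) (z j)]
  have hw : ∑ i, |w i| = ∑ j ∈ J, |w j| := by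
    rw [← sum_add_sum_compl J, sum_eq_zero (s := Jᶜ) fun j hj => by
      rw [hwJ j (mem_compl.1 hj), abs_zero], add_zero]
  have hzc : ∑ j ∈ Jᶜ, |z j| = ∑ j ∈ Jᶜ, |w j - z j| :=
    sum_congr rfl fun j hj => by rw [hwJ j (mem_compl.1 hj), zero_sub, abs_neg]
  have := sum_le_sum fun j (_ : j ∈ J) => hz j
  rw [sum_sub_distrib] at this
  rw [← sum_add_sum_compl J, hzc, hw] at hl1
  linarith

theorem semiGood_of_Phi_le {m s : ℕ} {ξ θ : ℝ} {A : Matrix (Fin m) (Fin n) ℝ} (hξ0 : 0 ≤ ξ)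
    (hξ1 : ξ < 1) (hθ : 0 ≤ θ)
    (hker : ∀ x, A *ᵥ x = 0 → Phi Pplus s ξ θ x ≤ ξ * ∑ j, weightedAbs Pplus θ x j) :
    SemiGood A Pplus s := by
  intro w hw hwP z hAz hzP hl1
  set J := univ.filter fun i => w i ≠ 0
  have hwJ : ∀ j ∉ J, w j = 0 := by simp [J]
  set x := w - z
  set r : Fin n → ℝ := fun j => if j ∈ Pplus then x j else |x j|
  set ν : Fin n → ℝ := fun j => if j ∈ Pplus then max (-x j) 0 else 0
  have hD : ∀ j, Dθ Pplus ξ θ x j - ξ * weightedAbs Pplus θ x j = r j + (1 - ξ) * ν j :=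
    fun j => by
      simp only [Dθ, weightedAbs, r, ν]
      split_ifs
      · linear_combination max_zero_sub_max_neg_zero_eq_self (x j)
      · ring
  have habs : ∀ j, |x j| = r j + 2 * ν j := fun j => by
    simp only [r, ν]
    split_ifs
    · linarith [max_zero_sub_max_neg_zero_eq_self (x j), max_zero_add_max_neg_zero_eq_abs_self (x j)]
    · ring
  have hν : ∀ j, 0 ≤ ν j := fun j => by simp only [ν]; split_ifs <;> positivity
  have hout : ∀ j ∉ J, weightedAbs Pplus θ x j = |x j| := fun j hj => by
    have hxj : x j = -z j := by simp [x, hwJ j hj]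
    unfold weightedAbs
    split_ifs with hjP
    · have := hzP j hjP
      rw [max_eq_right (by linarith), max_eq_left (by linarith), abs_of_nonpos (by linarith)]
      ring
    · rfl
  have hnull : ∑ j ∈ J, (r j + (1 - ξ) * ν j) ≤ ξ * ∑ j ∈ Jᶜ, |x j| := by
    have hker' := (sum_Dθ_le_Phi hξ0 hθ x hw).trans
      (hker x (by rw [mulVec_sub, hAz, sub_self]))
    rw [← sum_add_sum_compl J, sum_congr rfl fun j hj => hout j (mem_compl.1 hj)] at hker'
    simp only [← hD, sum_sub_distrib, ← mul_sum]
    linarith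
  have hl1' : ∑ j ∈ Jᶜ, |x j| ≤ ∑ j ∈ J, r j := sum_compl_abs_sub_le hwJ hwP hl1
  have hsum : ∑ j, |x j| ≤ 0 := by
    have hV := sum_nonneg fun j (_ : j ∈ J) => hν j
    have hT := sum_nonneg fun j (_ : j ∈ Jᶜ) => abs_nonneg (x j)
    rw [← sum_add_sum_compl J, sum_congr rfl fun j _ => habs j]
    rw [sum_add_distrib, ← mul_sum] at hnull ⊢
    nlinarith
  have hx : x = 0 := funext fun j =>
    abs_nonpos_iff.1 ((single_le_sum (fun i _ => abs_nonneg (x i)) (mem_univ j)).trans hsum)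
  exact (sub_eq_zero.1 hx).symm

end SemiGood

theorem stmt18_general {m n : ℕ} (A : Matrix (Fin m) (Fin n) ℝ) (Pplus : Finset (Fin n))
    (s : ℕ) (ξ σ θ : ℝ) (hξ0 : 0 ≤ ξ) (hξ1 : ξ < 1) (hθ : 1 ≤ θ)
    (N : (Fin m → ℝ) → ℝ)
    (Y : Matrix (Fin m) (Fin n) ℝ) (hY : VSGbarCert A Pplus s ξ σ θ N Y) :
    (∀ i, Phi Pplus s ξ θ
      (fun j => -((1 - Y.transpose * A : Matrix (Fin n) (Fin n) ℝ) j i)) ≤ ξ) ∧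
    (∀ i ∉ Pplus, Phi Pplus s ξ θ
      (fun j => (1 - Y.transpose * A : Matrix (Fin n) (Fin n) ℝ) j i) ≤ ξ) ∧
    (∀ i ∈ Pplus, Phi Pplus s ξ θ
      (fun j => (1 - Y.transpose * A : Matrix (Fin n) (Fin n) ℝ) j i) ≤ θ * ξ) ∧
    (∀ i, dualNorm N (fun k => Y k i) ≤ σ) ∧
    SemiGood A Pplus s := by
  have hθ0 : 0 ≤ θ := zero_le_one.trans hθ
  have hB := hY.scaledEntryBounds hξ0 hθ0
  have hfixed : ∀ x, A *ᵥ x = 0 → (1 - Yᵀ * A) *ᵥ x = x := fun x hx => by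
    rw [sub_mulVec, one_mulVec, ← mulVec_mulVec, hx, mulVec_zero, sub_zero]
  exact ⟨hB.Phi_neg_col_le hξ0 hθ0, fun i hi => hB.Phi_col_le_of_notMem hξ0 hθ0 hi,
    fun i hi => hB.Phi_col_le_of_mem hξ0 hθ hi, hY.1,
    semiGood_of_Phi_le hξ0 hξ1 hθ0 fun x hx => hB.Phi_le_of_mulVec_eq_self hξ0 hθ (hfixed x hx)⟩

theorem stmt18 {m n : ℕ} (A : Matrix (Fin m) (Fin n) ℝ) (Pplus : Finset (Fin n))
    (s : ℕ) (ξ σ θ : ℝ) (hξ0 : 0 ≤ ξ) (hξ1 : ξ < 1) (hσ : 0 ≤ σ) (hθ : 1 ≤ θ)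
    (N : (Fin m → ℝ) → ℝ) (hN : IsNorm N)
    (Y : Matrix (Fin m) (Fin n) ℝ) (hY : VSGbarCert A Pplus s ξ σ θ N Y) :
    (∀ i, Phi Pplus s ξ θ
      (fun j => -((1 - Y.transpose * A : Matrix (Fin n) (Fin n) ℝ) j i)) ≤ ξ) ∧
    (∀ i ∉ Pplus, Phi Pplus s ξ θ
      (fun j => (1 - Y.transpose * A : Matrix (Fin n) (Fin n) ℝ) j i) ≤ ξ) ∧
    (∀ i ∈ Pplus, Phi Pplus s ξ θ
      (fun j => (1 - Y.transpose * A : Matrix (Fin n) (Fin n) ℝ) j i) ≤ θ * ξ) ∧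
    (∀ i, dualNorm N (fun k => Y k i) ≤ σ) ∧
    SemiGood A Pplus s :=
  stmt18_general A Pplus s ξ σ θ hξ0 hξ1 hθ N Y hY
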